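/- arXiv:2107.06169 — 3 statements merged into one kernel-verified Lean document; each statement's English description precedes it below -/
import Mathlib

section
/- For all complex numbers z = x + iy with x ≥ 1/2, the reciprocal of the Gamma function satisfies |1/Γ(x+iy)| ≤ √(cosh(πy)) / Γ(x). -/
/-!
By the reflection formula and `Γ(conj s) = conj Γ(s)`, `|Γ(1/2 + iy)|² = π / cosh(πy)`.
Euler's product `Γ(s) = lim nˢ n! / ∏_{j ≤ n} (s + j)` shows that `x ↦ |Γ(x + iy)| / Γ(x)` is
nondecreasing on `(0, ∞)`, since each factor `(x + j) / |x + j + iy|` of its approximants is.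
Comparing `x ≥ 1/2` with `1/2` and using `Γ(1/2) = √π` gives the bound.
-/

open Complex Real
open scoped ComplexConjugate

lemma mul_sqrt_sq_add_le_mul_sqrt_sq_add {a b c : ℝ} (ha : 0 ≤ a) (hab : a ≤ b) (hc : 0 ≤ c) :
    a * √(b ^ 2 + c) ≤ b * √(a ^ 2 + c) := by
  have hsqrt {u : ℝ} (hu : 0 ≤ u) (v : ℝ) : u * √v = √(u ^ 2 * v) := by
    rw [Real.sqrt_mul (sq_nonneg u), Real.sqrt_sq hu]
  rw [hsqrt ha, hsqrt (ha.trans hab)]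
  refine Real.sqrt_le_sqrt ?_
  nlinarith [mul_le_mul_of_nonneg_right (pow_le_pow_left₀ ha hab 2) hc]

namespace Complex

lemma norm_GammaSeq_ofReal_add_mul_I (t y : ℝ) {n : ℕ} (hn : n ≠ 0) :
    ‖GammaSeq (t + y * I) n‖
      = (n : ℝ) ^ t * n.factorial / ∏ j ∈ Finset.range (n + 1), √((t + j) ^ 2 + y ^ 2) := by
  have hpos : (0 : ℝ) < n := by positivity
  rw [GammaSeq, norm_div, norm_mul, norm_prod, ← ofReal_natCast,
    norm_cpow_eq_rpow_re_of_pos hpos]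
  congr 1
  · simp
  · refine Finset.prod_congr rfl fun j _ => ?_
    rw [show (t : ℂ) + y * I + j = ((t + j : ℝ) : ℂ) + y * I by push_cast; ring, norm_add_mul_I]

lemma GammaSeq_mul_norm_GammaSeq_le {a x : ℝ} (ha : 0 < a) (hax : a ≤ x) (y : ℝ) {n : ℕ}
    (hn : n ≠ 0) :
    Real.GammaSeq x n * ‖GammaSeq (a + y * I) n‖ ≤
      Real.GammaSeq a n * ‖GammaSeq (x + y * I) n‖ := by
  have hx : 0 < x := ha.trans_le hax
  have hfactor (j : ℕ) : (a + j) * √((x + j) ^ 2 + y ^ 2) ≤ (x + j) * √((a + j) ^ 2 + y ^ 2) :=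
    mul_sqrt_sq_add_le_mul_sqrt_sq_add (by positivity) (by linarith) (sq_nonneg y)
  have hprod : (∏ j ∈ Finset.range (n + 1), (a + j)) *
        ∏ j ∈ Finset.range (n + 1), √((x + j) ^ 2 + y ^ 2) ≤
      (∏ j ∈ Finset.range (n + 1), (x + j)) *
        ∏ j ∈ Finset.range (n + 1), √((a + j) ^ 2 + y ^ 2) := by
    rw [← Finset.prod_mul_distrib, ← Finset.prod_mul_distrib]
    exact Finset.prod_le_prod (fun j _ => by positivity) fun j _ => hfactor j
  rw [norm_GammaSeq_ofReal_add_mul_I _ _ hn, norm_GammaSeq_ofReal_add_mul_I _ _ hn,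
    Real.GammaSeq, Real.GammaSeq, div_mul_div_comm, div_mul_div_comm,
    mul_comm ((n : ℝ) ^ x * _)]
  have hden : 0 < (∏ j ∈ Finset.range (n + 1), (a + j)) *
      ∏ j ∈ Finset.range (n + 1), √((x + j) ^ 2 + y ^ 2) := by
    rw [← Finset.prod_mul_distrib]
    exact Finset.prod_pos fun j _ => mul_pos (by positivity) (Real.sqrt_pos.2 (by positivity))
  gcongr

theorem Gamma_mul_norm_Gamma_le {a x : ℝ} (ha : 0 < a) (hax : a ≤ x) (y : ℝ) :
    Real.Gamma x * ‖Gamma (a + y * I)‖ ≤ Real.Gamma a * ‖Gamma (x + y * I)‖ :=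
  le_of_tendsto_of_tendsto
    ((Real.GammaSeq_tendsto_Gamma x).mul (GammaSeq_tendsto_Gamma _).norm)
    ((Real.GammaSeq_tendsto_Gamma a).mul (GammaSeq_tendsto_Gamma _).norm)
    (Filter.eventually_ne_atTop 0 |>.mono fun _ hn => GammaSeq_mul_norm_GammaSeq_le ha hax y hn)

theorem norm_Gamma_one_half_add_mul_I_sq (y : ℝ) :
    ‖Gamma (1 / 2 + y * I)‖ ^ 2 = π / Real.cosh (π * y) := by
  set w : ℂ := 1 / 2 + y * I
  have hreflect := Gamma_mul_Gamma_one_sub w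
  have hconj : 1 - w = conj w := by
    apply Complex.ext <;> simp [w]; norm_num
  have hsin : sin (π * w) = Real.cosh (π * y) := by
    rw [show (π : ℂ) * w = π / 2 + (π * y : ℝ) * I by push_cast [w]; ring, sin_add,
      sin_pi_div_two, cos_pi_div_two, cos_mul_I, ofReal_cosh]
    ring
  rw [hconj, Gamma_conj, mul_conj, normSq_eq_norm_sq, hsin, ← ofReal_div] at hreflect
  exact_mod_cast hreflect

end Complex

/-- For all complex numbers `z = x + iy` with `x ≥ 1/2`, the reciprocal of the Gamma
function satisfies `|1/Γ(x+iy)| ≤ √(cosh(πy)) / Γ(x)`. -/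
theorem gamma_reciprocal_bound (x y : ℝ) (hx : (1:ℝ)/2 ≤ x) :
    ‖(Complex.Gamma (x + y * Complex.I))⁻¹‖ ≤
      Real.sqrt (Real.cosh (π * y)) / Real.Gamma x := by
  have hΓx : 0 < Real.Gamma x := Real.Gamma_pos_of_pos (by linarith)
  have hcosh : 0 < √(Real.cosh (π * y)) := Real.sqrt_pos.2 (Real.cosh_pos _)
  have hhalf : ‖Complex.Gamma (1 / 2 + y * I)‖ = √π / √(Real.cosh (π * y)) := by
    rw [← Real.sqrt_sq (norm_nonneg _), norm_Gamma_one_half_add_mul_I_sq,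
      Real.sqrt_div Real.pi_pos.le]
  have hmono := Gamma_mul_norm_Gamma_le (by norm_num : (0 : ℝ) < 1 / 2) hx y
  rw [Real.Gamma_one_half_eq, show ((1 / 2 : ℝ) : ℂ) = 1 / 2 by norm_num, hhalf,
    ← mul_div_assoc, div_le_iff₀ hcosh, mul_comm (Real.Gamma x), mul_assoc] at hmono
  have hΓ : Real.Gamma x ≤ ‖Complex.Gamma (x + y * I)‖ * √(Real.cosh (π * y)) :=
    le_of_mul_le_mul_left hmono (Real.sqrt_pos.2 Real.pi_pos)
  have hΓz : 0 < ‖Complex.Gamma (x + y * I)‖ := pos_of_mul_pos_left (hΓx.trans_le hΓ) hcosh.le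
  rw [norm_inv, le_div_iff₀ hΓx, inv_mul_le_iff₀ hΓz]
  exact hΓ
end

section
/- Let γ be a contour consisting of two horizontal rays Im t = ±δ for Re t ≤ 0 joined by a semicircle in the right half-plane around 0, with Re t ≤ b on γ for some fixed b, and let α > 0. Then there exists C > 0 such that |Γ(t) e^{−α t²/2 + x(t − 1/2)}| ≤ C e^{−C|t|²} for all t ∈ γ with |t| sufficiently large, uniformly in x > 0. -/
/-!
On the rays `Γ` grows at most exponentially in `|t|`: `|Γ| ≤ 1` on the strip `1 ≤ Re t ≤ 2`, and
each step to the left by `Γ(t) = Γ(t + 1) / t` costs a factor `1 / |t| ≤ 1 / δ`. Since `Re t ≤ 0`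
and `x > 0`, the other factor has modulus at most `exp (-α|t|²/2 + αδ²)`, and this Gaussian beats
the exponential growth of `Γ`.
-/

open Complex Filter Topology MeasureTheory

lemma Complex.norm_Gamma_le_Gamma_re {s : ℂ} (hs : 0 < s.re) :
    ‖Gamma s‖ ≤ Real.Gamma s.re := by
  rw [Gamma_eq_integral hs, GammaIntegral, Real.Gamma_eq_integral hs]
  refine (norm_integral_le_integral_norm _).trans_eq
    (setIntegral_congr_fun measurableSet_Ioi fun x hx => ?_)
  rw [norm_mul, Complex.norm_of_nonneg (Real.exp_pos _).le, norm_cpow_eq_rpow_re_of_pos hx]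
  simp

lemma Real.Gamma_le_one_of_mem_Icc {x : ℝ} (hx : x ∈ Set.Icc 1 2) : Real.Gamma x ≤ 1 := by
  simpa using Real.convexOn_Gamma.le_on_segment (Set.mem_Ioi.2 one_pos) (Set.mem_Ioi.2 two_pos)
    (Icc_subset_segment (𝕜 := ℝ) hx)

lemma Complex.norm_Gamma_le_one_of_re_mem_Icc {t : ℂ} (ht : t.re ∈ Set.Icc 1 2) :
    ‖Gamma t‖ ≤ 1 :=
  (norm_Gamma_le_Gamma_re (by linarith [ht.1])).trans (Real.Gamma_le_one_of_mem_Icc ht)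

lemma Complex.norm_Gamma_le_pow_of_le_abs_im {δ : ℝ} (hδ : 0 < δ) (n : ℕ) {t : ℂ}
    (him : δ ≤ |t.im|) (hlow : 1 - n ≤ t.re) (hhigh : t.re ≤ 2) :
    ‖Gamma t‖ ≤ max 1 δ⁻¹ ^ n := by
  induction n generalizing t with
  | zero => simpa using norm_Gamma_le_one_of_re_mem_Icc ⟨by simpa using hlow, hhigh⟩
  | succ n ih =>
    rcases le_or_gt 1 t.re with hre | hre
    · exact (norm_Gamma_le_one_of_re_mem_Icc ⟨hre, hhigh⟩).trans
        (one_le_pow₀ (le_max_left _ _))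
    have hδt : δ ≤ ‖t‖ := him.trans (abs_im_le_norm t)
    have ht0 : t ≠ 0 := norm_pos_iff.1 (hδ.trans_le hδt)
    have hshift : ‖Gamma (t + 1)‖ ≤ max 1 δ⁻¹ ^ n :=
      ih (by simpa using him) (by simp only [add_re, one_re]; push_cast at hlow; linarith)
        (by simp only [add_re, one_re]; linarith)
    calc ‖Gamma t‖ = ‖Gamma (t + 1)‖ * ‖t‖⁻¹ := by
          rw [Gamma_add_one t ht0, norm_mul, mul_comm ‖t‖, mul_inv_cancel_right₀ (by simpa)]
      _ ≤ max 1 δ⁻¹ ^ n * max 1 δ⁻¹ := by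
          gcongr
          exact (inv_anti₀ hδ hδt).trans (le_max_right _ _)
      _ = max 1 δ⁻¹ ^ (n + 1) := (pow_succ _ _).symm

lemma Complex.norm_Gamma_le_exp_of_le_abs_im {δ : ℝ} (hδ : 0 < δ) {t : ℂ}
    (him : δ ≤ |t.im|) (hre : t.re ≤ 1) :
    ‖Gamma t‖ ≤ Real.exp ((‖t‖ + 2) * Real.log (max 1 δ⁻¹)) := by
  have hm : 0 < max 1 δ⁻¹ := one_pos.trans_le (le_max_left _ _)
  have hceil : (⌈1 - t.re⌉₊ : ℝ) ≤ ‖t‖ + 2 := by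
    linarith [Nat.ceil_lt_add_one (by linarith : 0 ≤ 1 - t.re),
      neg_le_of_abs_le (abs_re_le_norm t)]
  calc ‖Gamma t‖ ≤ max 1 δ⁻¹ ^ ⌈1 - t.re⌉₊ :=
        norm_Gamma_le_pow_of_le_abs_im hδ _ him (by linarith [Nat.le_ceil (1 - t.re)])
          (by linarith)
    _ = Real.exp (⌈1 - t.re⌉₊ * Real.log (max 1 δ⁻¹)) := by
        rw [Real.exp_nat_mul, Real.exp_log hm]
    _ ≤ Real.exp ((‖t‖ + 2) * Real.log (max 1 δ⁻¹)) := by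
        gcongr
        exact Real.log_nonneg (le_max_left _ _)

lemma re_gaussian_exponent_le (α : ℝ) {x : ℝ} (hx : 0 ≤ x) {t : ℂ} (ht : t.re ≤ 1 / 2) :
    (-(α : ℂ) * t ^ 2 / 2 + (x : ℂ) * (t - 1 / 2)).re ≤
      -(α / 2) * ‖t‖ ^ 2 + α * t.im ^ 2 := by
  have hx' : x * (t.re - 1 / 2) ≤ 0 := mul_nonpos_of_nonneg_of_nonpos hx (by linarith)
  rw [Complex.sq_norm, normSq_apply]
  simp only [pow_two, neg_mul, one_div, add_re, div_ofNat_re, neg_re, mul_re, ofReal_re, ofReal_im,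
    mul_im, zero_mul, sub_zero, sub_re, inv_re, re_ofNat, normSq_ofNat, div_self_mul_self', sub_im,
    inv_im, im_ofNat, neg_zero, zero_div]
  nlinarith

lemma tendsto_exp_add_mul_sub_mul_sq_atTop (a b : ℝ) {c : ℝ} (hc : 0 < c) :
    Tendsto (fun s : ℝ => Real.exp (a + b * s - c * s ^ 2)) atTop (𝓝 0) := by
  have hlin : Tendsto (fun s : ℝ => b - c * s) atTop atBot :=
    tendsto_atBot_add_const_left _ b
      (tendsto_neg_atTop_atBot.comp (tendsto_id.const_mul_atTop hc))
  have hquad : Tendsto (fun s : ℝ => a + s * (b - c * s)) atTop atBot :=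
    tendsto_atBot_add_const_left _ a (tendsto_id.atTop_mul_atBot₀ hlin)
  refine Real.tendsto_exp_atBot.comp (hquad.congr fun s => ?_)
  ring

/-- Gaussian decay on the horizontal rays of the contour `γ`: for fixed `α > 0` and
`δ > 0`, there is `C > 0` and a radius `R` such that for every point `t` on the rays
`Im t = ±δ`, `Re t ≤ 0`, with `|t| ≥ R`, one has
`|Γ(t) e^{−α t²/2 + x(t − 1/2)}| ≤ C e^{−C|t|²}` uniformly in `x > 0`. -/
theorem gamma_gaussian_decay_on_rays (α δ : ℝ) (hα : 0 < α) (hδ : 0 < δ) :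
    ∃ C > 0, ∃ R : ℝ, ∀ t : ℂ, (t.im = δ ∨ t.im = -δ) → t.re ≤ 0 → R ≤ ‖t‖ →
      ∀ x : ℝ, 0 < x →
        ‖Complex.Gamma t * Complex.exp (-(α : ℂ) * t ^ 2 / 2 + (x : ℂ) * (t - 1 / 2))‖
          ≤ C * Real.exp (-C * ‖t‖ ^ 2) := by
  set L := Real.log (max 1 δ⁻¹)
  have hC : 0 < α / 4 := by positivity
  obtain ⟨R, hR⟩ := eventually_atTop.1 <|
    (tendsto_exp_add_mul_sub_mul_sq_atTop (2 * L + α * δ ^ 2) L hC).eventually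
      (ge_mem_nhds hC)
  refine ⟨α / 4, hC, R, fun t him hre htR x hx => ?_⟩
  have him2 : t.im ^ 2 = δ ^ 2 := by rcases him with h | h <;> simp [h]
  have hΓ := norm_Gamma_le_exp_of_le_abs_im hδ (t := t)
    (by rcases him with h | h <;> simp [h, abs_of_pos hδ]) (by linarith)
  have hE := re_gaussian_exponent_le α hx.le (t := t) (by linarith)
  calc _ = ‖Gamma t‖ * Real.exp (-(α : ℂ) * t ^ 2 / 2 + (x : ℂ) * (t - 1 / 2)).re := by
        rw [norm_mul, norm_exp]
    _ ≤ Real.exp ((‖t‖ + 2) * L) * Real.exp (-(α / 2) * ‖t‖ ^ 2 + α * δ ^ 2) := by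
        gcongr
        rwa [← him2]
    _ = Real.exp (2 * L + α * δ ^ 2 + L * ‖t‖ - α / 4 * ‖t‖ ^ 2) *
          Real.exp (-(α / 4) * ‖t‖ ^ 2) := by
        rw [← Real.exp_add, ← Real.exp_add]
        ring_nf
    _ ≤ α / 4 * Real.exp (-(α / 4) * ‖t‖ ^ 2) := by
        gcongr
        exact hR _ htR
end

section
/- For fixed α > 0 define φ(a) = α^{-1} log(a/α) and Q(s; t) = Γ(t) e^{−is log t} / Γ(t − is) − 1. Then for all real s and all sufficiently large a, |Q(s + iφ(a); a/α)| ≤ 2 e^{π|s|/2}. -/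
/-!
Write `t = a/α` and `p = φ(a)`, so that `Q + 1 = Γ(t) t^{p - is} / Γ(t + p - is)` and the
numerator has modulus `Γ(t) t^p`. Log-convexity of `Γ` gives `Γ(t) t^p ≤ Γ(t + p)` once
`p ≥ 1`, which holds for `a ≥ α e^α`. For the denominator, `|Γ(x + iy)| / Γ(x)` is increasing
in `x > 0`, being the limit of `∏ⱼ |(x + j) / (x + j + iy)|`; at `x = 1/2` the reflection formula
gives `|Γ(1/2 + iy)|² = π / cosh(πy)`, so `|Γ(x + iy)| ≥ Γ(x) / √(cosh πy)` for `x ≥ 1/2`.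
Hence `|Q + 1| ≤ √(cosh πs) ≤ e^{π|s|/2}`.
-/

open Complex Real
open Filter Finset Topology ComplexConjugate

theorem Real.sqrt_cosh_le_exp_abs_div_two (x : ℝ) : √(Real.cosh x) ≤ Real.exp (|x| / 2) := by
  rw [Real.exp_half, ← Real.cosh_abs, Real.cosh_eq]
  gcongr
  linarith [Real.exp_le_exp.mpr (by linarith [abs_nonneg x] : -|x| ≤ |x|)]

theorem Real.Gamma_mul_rpow_le_Gamma_add {t p : ℝ} (ht : 0 < t) (hp : 1 ≤ p) :
    Real.Gamma t * t ^ p ≤ Real.Gamma (t + p) := by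
  have hΓ := Real.Gamma_pos_of_pos ht
  have hΓp := Real.Gamma_pos_of_pos (by linarith : 0 < t + p)
  -- the secant slope of `log Γ` from `t` to `t + 1` is `log t`
  have hslope := Real.convexOn_log_Gamma.secant_mono (a := t) (x := t + 1) (y := t + p) ht
    (by simp only [Set.mem_Ioi]; linarith) (by simp only [Set.mem_Ioi]; linarith)
    (by linarith) (by linarith) (by linarith)
  simp only [Function.comp_apply, add_sub_cancel_left, div_one, Real.Gamma_add_one ht.ne',
    Real.log_mul ht.ne' hΓ.ne', add_sub_cancel_right] at hslope
  rw [le_div_iff₀ (by linarith)] at hslope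
  calc Real.Gamma t * t ^ p = Real.exp (Real.log (Real.Gamma t) + p * Real.log t) := by
        rw [Real.exp_add, Real.exp_log hΓ, Real.rpow_def_of_pos ht, mul_comm p]
    _ ≤ Real.exp (Real.log (Real.Gamma (t + p))) := Real.exp_le_exp.mpr (by linarith)
    _ = Real.Gamma (t + p) := Real.exp_log hΓp

theorem Complex.norm_Gamma_one_half_add_mul_I_sq_s17 (y : ℝ) :
    ‖Complex.Gamma (1 / 2 + y * I)‖ ^ 2 = π / Real.cosh (π * y) := by
  have hconj : Complex.Gamma (1 - (1 / 2 + y * I)) = conj (Complex.Gamma (1 / 2 + y * I)) := by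
    rw [← Complex.Gamma_conj]
    congr 1
    apply Complex.ext <;> norm_num
  have hsin : Complex.sin (π * (1 / 2 + y * I)) = Real.cosh (π * y) := by
    rw [show (π : ℂ) * (1 / 2 + y * I) = (π * y : ℝ) * I + π / 2 by push_cast; ring,
      sin_add_pi_div_two, cos_mul_I, ofReal_cosh]
  have hrefl := Complex.Gamma_mul_Gamma_one_sub (1 / 2 + y * I)
  rw [hconj, Complex.mul_conj, hsin, Complex.normSq_eq_norm_sq] at hrefl
  exact_mod_cast hrefl

theorem Complex.norm_ofReal_div_add_mul_I_le {u v : ℝ} (hu : 0 < u) (huv : u ≤ v) (y : ℝ) :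
    ‖(u : ℂ) / (u + y * I)‖ ≤ ‖(v : ℂ) / (v + y * I)‖ := by
  have hv : 0 < v := hu.trans_le huv
  rw [← sq_le_sq₀ (norm_nonneg _) (norm_nonneg _), ← normSq_eq_norm_sq, ← normSq_eq_norm_sq,
    normSq_div, normSq_div, normSq_add_mul_I, normSq_add_mul_I, normSq_ofReal, normSq_ofReal,
    div_le_div_iff₀ (by positivity) (by positivity)]
  nlinarith [mul_le_mul_of_nonneg_right (mul_self_le_mul_self hu.le huv) (sq_nonneg y)]

theorem Complex.norm_GammaSeq_add_mul_I {x : ℝ} (hx : 0 < x) (y : ℝ) {n : ℕ} (hn : n ≠ 0) :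
    ‖GammaSeq (x + y * I) n‖ =
      ‖GammaSeq x n‖ * ∏ j ∈ range (n + 1), ‖(x + j : ℂ) / (x + y * I + j)‖ := by
  have hn' : (n : ℂ) ≠ 0 := by exact_mod_cast hn
  have hprod : ∏ j ∈ range (n + 1), ((x : ℂ) + j) ≠ 0 :=
    prod_ne_zero_iff.mpr fun j _ => by exact_mod_cast (by positivity : x + j ≠ 0)
  have hprod' : ∏ j ∈ range (n + 1), ((x : ℂ) + y * I + j) ≠ 0 :=
    prod_ne_zero_iff.mpr fun j _ h => by
      have hre : x + j = 0 := by simpa using congrArg Complex.re h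
      linarith [(by positivity : (0 : ℝ) ≤ j)]
  have hseq : GammaSeq (x + y * I) n = (n : ℂ) ^ (y * I) * GammaSeq x n *
      ∏ j ∈ range (n + 1), ((x + j : ℂ) / (x + y * I + j)) := by
    rw [GammaSeq, GammaSeq, cpow_add _ _ hn', prod_div_distrib]
    field_simp
  rw [hseq, norm_mul, norm_mul, norm_prod, norm_natCast_cpow_of_pos (Nat.pos_of_ne_zero hn)]
  simp

theorem Complex.monotoneOn_norm_Gamma_add_mul_I_div_Gamma (y : ℝ) :
    MonotoneOn (fun x : ℝ => ‖Complex.Gamma (x + y * I)‖ / Real.Gamma x) (Set.Ioi 0) := by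
  have hlim : ∀ x : ℝ, 0 < x → Tendsto
      (fun n => ∏ j ∈ range (n + 1), ‖(x + j : ℂ) / (x + y * I + j)‖) atTop
      (𝓝 (‖Complex.Gamma (x + y * I)‖ / Real.Gamma x)) := by
    intro x hx
    have hΓ : Complex.Gamma x ≠ 0 := by
      rw [Complex.Gamma_ofReal]
      exact_mod_cast (Real.Gamma_pos_of_pos hx).ne'
    have hlimx := GammaSeq_tendsto_Gamma (x : ℂ)
    rw [← norm_of_nonneg (Real.Gamma_pos_of_pos hx).le, ← norm_real, ← Complex.Gamma_ofReal]
    refine ((GammaSeq_tendsto_Gamma _).norm.div hlimx.norm (norm_ne_zero_iff.mpr hΓ)).congr' ?_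
    filter_upwards [eventually_ne_atTop 0, hlimx.eventually_ne hΓ] with n hn hseq
    rw [Pi.div_apply, norm_GammaSeq_add_mul_I hx y hn,
      mul_div_cancel_left₀ _ (norm_ne_zero_iff.mpr hseq)]
  intro u (hu : 0 < u) v (hv : 0 < v) huv
  refine le_of_tendsto_of_tendsto' (hlim u hu) (hlim v hv) fun n => ?_
  refine prod_le_prod (fun _ _ => norm_nonneg _) fun j _ => ?_
  have := norm_ofReal_div_add_mul_I_le (u := u + j) (v := v + j) (by positivity) (by linarith) y
  push_cast at this
  simpa only [add_right_comm _ (j : ℂ)] using this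

theorem Complex.Gamma_div_sqrt_cosh_le_norm_Gamma {x : ℝ} (hx : 1 / 2 ≤ x) (y : ℝ) :
    Real.Gamma x / √(Real.cosh (π * y)) ≤ ‖Complex.Gamma (x + y * I)‖ := by
  have hΓ := Real.Gamma_pos_of_pos (by linarith : 0 < x)
  have hhalf : ‖Complex.Gamma ((1 / 2 : ℝ) + y * I)‖ / Real.Gamma (1 / 2) =
      (√(Real.cosh (π * y)))⁻¹ := by
    rw [Real.Gamma_one_half_eq, ← Real.sqrt_sq (norm_nonneg _), ofReal_div, ofReal_one,
      ofReal_ofNat, norm_Gamma_one_half_add_mul_I_sq_s17, Real.sqrt_div' _ (cosh_pos _).le,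
      div_div_cancel_left' (Real.sqrt_pos.mpr pi_pos).ne']
  have hmono := monotoneOn_norm_Gamma_add_mul_I_div_Gamma y (by norm_num : (0 : ℝ) < 1 / 2)
    (by linarith : (0 : ℝ) < x) hx
  dsimp only at hmono
  rwa [hhalf, le_div_iff₀ hΓ, inv_mul_eq_div] at hmono

theorem Complex.norm_Gamma_mul_exp_div_Gamma_le {t p : ℝ} (ht : 0 < t) (hp : 1 ≤ p) (s : ℝ) :
    ‖Complex.Gamma t * Complex.exp (-I * (s + I * p) * Complex.log t) /
      Complex.Gamma (t - I * (s + I * p))‖ ≤ √(Real.cosh (π * s)) := by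
  have hnum : ‖Complex.Gamma t * Complex.exp (-I * (s + I * p) * Complex.log t)‖ =
      Real.Gamma t * t ^ p := by
    rw [norm_mul, Complex.Gamma_ofReal, norm_real, norm_of_nonneg (Real.Gamma_pos_of_pos ht).le,
      norm_exp, ← ofReal_log ht.le, Real.rpow_def_of_pos ht]
    simp [mul_comm]
  have harg : (t : ℂ) - I * (s + I * p) = ((t + p : ℝ) : ℂ) + ((-s : ℝ) : ℂ) * I := by
    push_cast
    linear_combination (-(p : ℂ)) * I_sq
  have hden : Real.Gamma (t + p) / √(Real.cosh (π * s)) ≤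
      ‖Complex.Gamma (t - I * (s + I * p))‖ := by
    have hlow := Gamma_div_sqrt_cosh_le_norm_Gamma (x := t + p) (by linarith) (-s)
    rwa [mul_neg, Real.cosh_neg, ← harg] at hlow
  have hΓp := Real.Gamma_pos_of_pos (by linarith : 0 < t + p)
  rw [norm_div, hnum]
  calc Real.Gamma t * t ^ p / ‖Complex.Gamma (t - I * (s + I * p))‖
      ≤ Real.Gamma (t + p) / (Real.Gamma (t + p) / √(Real.cosh (π * s))) :=
        div_le_div₀ hΓp.le (Real.Gamma_mul_rpow_le_Gamma_add ht hp)
          (div_pos hΓp (Real.sqrt_pos.mpr (cosh_pos _))) hden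
    _ = √(Real.cosh (π * s)) := div_div_cancel₀ hΓp.ne'

/-- For fixed `α > 0`, with `φ(a) = α⁻¹ log(a/α)` and
`Q(s; t) = Γ(t) e^{−is log t} / Γ(t − is) − 1`, for all real `s` and all sufficiently
large `a` one has `|Q(s + iφ(a); a/α)| ≤ 2 e^{π|s|/2}`. -/
theorem Q_bound (α : ℝ) (hα : 0 < α)
    (Q : ℂ → ℂ → ℂ)
    (hQ : ∀ s t : ℂ, Q s t =
      Complex.Gamma t * Complex.exp (-Complex.I * s * Complex.log t) /
        Complex.Gamma (t - Complex.I * s) - 1)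
    (φ : ℝ → ℝ) (hφ : ∀ a : ℝ, φ a = α⁻¹ * Real.log (a / α)) :
    ∃ A : ℝ, ∀ a : ℝ, A ≤ a → ∀ s : ℝ,
      ‖Q ((s : ℂ) + Complex.I * (φ a : ℂ)) ((a / α : ℝ) : ℂ)‖
        ≤ 2 * Real.exp (π * |s| / 2) := by
  refine ⟨α * Real.exp α, fun a ha s => ?_⟩
  have ht : Real.exp α ≤ a / α := by rwa [le_div_iff₀ hα, mul_comm]
  have ht0 : 0 < a / α := (Real.exp_pos α).trans_le ht
  have hp : 1 ≤ φ a := by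
    rwa [hφ, ← div_eq_inv_mul, one_le_div hα, Real.le_log_iff_exp_le ht0]
  have hcosh : √(Real.cosh (π * s)) ≤ Real.exp (π * |s| / 2) := by
    simpa [abs_mul, abs_of_pos pi_pos] using Real.sqrt_cosh_le_exp_abs_div_two (π * s)
  rw [hQ]
  calc _ ≤ √(Real.cosh (π * s)) + ‖(1 : ℂ)‖ :=
        (norm_sub_le _ _).trans (add_le_add_left
          (norm_Gamma_mul_exp_div_Gamma_le ht0 hp s) _)
    _ ≤ 2 * Real.exp (π * |s| / 2) := by
        rw [norm_one]
        linarith [Real.one_le_exp (by positivity : 0 ≤ π * |s| / 2)]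
end
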